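/- arXiv:2506.11411 — 2 statements merged into one kernel-verified Lean document; each statement's English description precedes it below -/
import Mathlib

section
/- Let f : ℝⁿ × ℝᵐ → ℝⁿ and h : ℝⁿ × ℝᵐ → ℝᵐ be continuously differentiable, let P be symmetric positive definite, ε > 0, and X a symmetric 2m×2m matrix. Suppose at every point (x,u) in a set D the matrix inequality [[P·∂f/∂x + (∂f/∂x)ᵀ·P + εI, P·∂f/∂u],[(∂f/∂u)ᵀ·P, 0]] − [[0, I],[∂h/∂x, ∂h/∂u]]ᵀ X [[0, I],[∂h/∂x, ∂h/∂u]] ⪯ 0 holds. Then along any C¹ trajectory (x(t), u(t)) remaining in D with ẋ = f(x,u) and y = h(x,u), the storage function S(x,u) = f(x,u)ᵀ P f(x,u) satisfies dS/dt ≤ [u̇; ẏ]ᵀ X [u̇; ẏ] − ε‖f(x,u)‖². -/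
/-!
Along a trajectory `ḟ = A ẋ + B u̇ = A f + B u̇` with `A = ∂f/∂x`, `B = ∂f/∂u`, so
`Ṡ = ḟᵀ P f + fᵀ P ḟ`, and `Ṡ + ε ‖f‖²` is the quadratic form of `M` at `z = (f, u̇)`.
By the chain rule for `h`, `N z = (u̇, ẏ)`, so evaluating `M ⪯ Nᵀ X N` at `z` gives
`Ṡ + ε ‖f‖² ≤ (u̇, ẏ)ᵀ X (u̇, ẏ)`.
-/

open Matrix

section Derivatives

variable {ι κ : Type*} [Fintype ι] {t : ℝ} {g k : ℝ → ι → ℝ} {g' k' : ι → ℝ}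

theorem hasDerivAt_dotProduct (hg : ∀ i, HasDerivAt (fun τ => g τ i) (g' i) t)
    (hk : ∀ i, HasDerivAt (fun τ => k τ i) (k' i) t) :
    HasDerivAt (fun τ => g τ ⬝ᵥ k τ) (g' ⬝ᵥ k t + g t ⬝ᵥ k') t := by
  simp only [dotProduct, ← Finset.sum_add_distrib]
  exact HasDerivAt.fun_sum fun i _ => (hg i).fun_mul (hk i)

theorem hasDerivAt_mulVec_apply (A : Matrix κ ι ℝ)
    (hk : ∀ i, HasDerivAt (fun τ => k τ i) (k' i) t) (j : κ) :
    HasDerivAt (fun τ => (A *ᵥ k τ) j) ((A *ᵥ k') j) t :=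
  HasDerivAt.fun_sum fun i _ => (hk i).const_mul (A j i)

end Derivatives

section QuadraticForms

variable {n m p : Type*} [Fintype n] [Fintype m] [Fintype p]

theorem dotProduct_transpose_mul_mul_mulVec (N : Matrix p n ℝ) (X : Matrix p p ℝ) (z : n → ℝ) :
    z ⬝ᵥ (Nᵀ * X * N) *ᵥ z = (N *ᵥ z) ⬝ᵥ X *ᵥ (N *ᵥ z) := by
  rw [← mulVec_mulVec, ← mulVec_mulVec, dotProduct_mulVec, vecMul_transpose]

theorem dotProduct_mulVec_le_of_posSemidef_sub {M Q : Matrix n n ℝ} (h : (Q - M).PosSemidef)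
    (z : n → ℝ) : z ⬝ᵥ M *ᵥ z ≤ z ⬝ᵥ Q *ᵥ z := by
  have := h.dotProduct_mulVec_nonneg z
  rw [sub_mulVec, dotProduct_sub] at this
  exact sub_nonneg.mp this

theorem fromBlocks_zero_one_mulVec_sumElim [DecidableEq m] (C : Matrix m n ℝ) (E : Matrix m m ℝ)
    (v : n → ℝ) (w : m → ℝ) :
    fromBlocks 0 1 C E *ᵥ Sum.elim v w = Sum.elim w (C *ᵥ v + E *ᵥ w) := by
  simp [fromBlocks_mulVec]

theorem sumElim_dotProduct_krasovskii_mulVec_sumElim [DecidableEq n] (P A : Matrix n n ℝ)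
    (B : Matrix n m ℝ) (ε : ℝ) (v : n → ℝ) (w : m → ℝ) :
    Sum.elim v w ⬝ᵥ fromBlocks (P * A + Aᵀ * P + ε • 1) (P * B) (Bᵀ * P) 0 *ᵥ Sum.elim v w =
      (A *ᵥ v + B *ᵥ w) ⬝ᵥ P *ᵥ v + v ⬝ᵥ P *ᵥ (A *ᵥ v + B *ᵥ w) + ε * (v ⬝ᵥ v) := by
  simp only [fromBlocks_mulVec, sumElim_dotProduct_sumElim, add_mulVec, smul_mulVec, one_mulVec,
    zero_mulVec, add_zero, ← mulVec_mulVec, mulVec_add, dotProduct_add, add_dotProduct,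
    dotProduct_smul, dotProduct_transpose_mulVec, smul_eq_mul, Sum.elim_comp_inl,
    Sum.elim_comp_inr]
  rw [dotProduct_comm (P *ᵥ v) (A *ᵥ v), dotProduct_comm (P *ᵥ v) (B *ᵥ w)]
  ring

end QuadraticForms

theorem stmt_1_general {n m : ℕ}
    (f : (Fin n → ℝ) → (Fin m → ℝ) → (Fin n → ℝ))
    (Jfx : (Fin n → ℝ) → (Fin m → ℝ) → Matrix (Fin n) (Fin n) ℝ)
    (Jfu : (Fin n → ℝ) → (Fin m → ℝ) → Matrix (Fin n) (Fin m) ℝ)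
    (Jhx : (Fin n → ℝ) → (Fin m → ℝ) → Matrix (Fin m) (Fin n) ℝ)
    (Jhu : (Fin n → ℝ) → (Fin m → ℝ) → Matrix (Fin m) (Fin m) ℝ)
    (P : Matrix (Fin n) (Fin n) ℝ)
    (ε : ℝ)
    (X : Matrix (Fin m ⊕ Fin m) (Fin m ⊕ Fin m) ℝ)
    (D : Set ((Fin n → ℝ) × (Fin m → ℝ)))
    -- the matrix inequality holds at every point of D
    (hLMI : ∀ p ∈ D,
      let M : Matrix (Fin n ⊕ Fin m) (Fin n ⊕ Fin m) ℝ :=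
        Matrix.fromBlocks
          (P * Jfx p.1 p.2 + (Jfx p.1 p.2)ᵀ * P + ε • (1 : Matrix (Fin n) (Fin n) ℝ))
          (P * Jfu p.1 p.2) ((Jfu p.1 p.2)ᵀ * P) 0
      let N : Matrix (Fin m ⊕ Fin m) (Fin n ⊕ Fin m) ℝ :=
        Matrix.fromBlocks (0 : Matrix (Fin m) (Fin n) ℝ) (1 : Matrix (Fin m) (Fin m) ℝ)
          (Jhx p.1 p.2) (Jhu p.1 p.2)
      (Nᵀ * X * N - M).PosSemidef)
    -- a C¹ trajectory remaining in D with ẋ = f(x,u), y = h(x,u)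
    (x : ℝ → Fin n → ℝ) (u : ℝ → Fin m → ℝ)
    (x' : ℝ → Fin n → ℝ) (u' : ℝ → Fin m → ℝ) (y' : ℝ → Fin m → ℝ)
    (hdyn : ∀ t, x' t = f (x t) (u t))
    -- chain rule along the trajectory for f and h, via their Jacobians
    (hchainf : ∀ t i, HasDerivAt (fun τ => f (x τ) (u τ) i)
      ((Jfx (x t) (u t)).mulVec (x' t) i + (Jfu (x t) (u t)).mulVec (u' t) i) t)
    (hchainh : ∀ t, y' t =
      (Jhx (x t) (u t)).mulVec (x' t) + (Jhu (x t) (u t)).mulVec (u' t))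
    (hD : ∀ t, (x t, u t) ∈ D) :
    -- the storage function S = fᵀ P f satisfies Ṡ ≤ [u̇;ẏ]ᵀ X [u̇;ẏ] − ε‖f‖²
    ∀ t s, HasDerivAt (fun τ => f (x τ) (u τ) ⬝ᵥ P.mulVec (f (x τ) (u τ))) s t →
      s ≤ Sum.elim (u' t) (y' t) ⬝ᵥ X.mulVec (Sum.elim (u' t) (y' t))
          - ε * (f (x t) (u t) ⬝ᵥ f (x t) (u t)) := by
  intro t s hs
  have hf' : ∀ i, HasDerivAt (fun τ => f (x τ) (u τ) i)
      ((Jfx (x t) (u t) *ᵥ x' t + Jfu (x t) (u t) *ᵥ u' t) i) t := hchainf t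
  have hs_eq := hs.unique (hasDerivAt_dotProduct hf' (hasDerivAt_mulVec_apply P hf'))
  have hle := dotProduct_mulVec_le_of_posSemidef_sub (hLMI _ (hD t)) (Sum.elim (x' t) (u' t))
  rw [sumElim_dotProduct_krasovskii_mulVec_sumElim, dotProduct_transpose_mul_mul_mulVec,
    fromBlocks_zero_one_mulVec_sumElim, ← hchainh t] at hle
  rw [← hdyn t] at hs_eq ⊢
  linarith

/-- Krasovskii-type certificate for delta dissipativity of a nonlinear system
`ẋ = f(x,u)`, `y = h(x,u)`.  The Jacobians of `f` and `h` are given by the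
matrix-valued functions `Jfx, Jfu, Jhx, Jhu`, and the chain rule along the
trajectory is recorded as hypotheses. -/
theorem stmt_1 {n m : ℕ}
    (f : (Fin n → ℝ) → (Fin m → ℝ) → (Fin n → ℝ))
    (h : (Fin n → ℝ) → (Fin m → ℝ) → (Fin m → ℝ))
    (Jfx : (Fin n → ℝ) → (Fin m → ℝ) → Matrix (Fin n) (Fin n) ℝ)
    (Jfu : (Fin n → ℝ) → (Fin m → ℝ) → Matrix (Fin n) (Fin m) ℝ)
    (Jhx : (Fin n → ℝ) → (Fin m → ℝ) → Matrix (Fin m) (Fin n) ℝ)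
    (Jhu : (Fin n → ℝ) → (Fin m → ℝ) → Matrix (Fin m) (Fin m) ℝ)
    (P : Matrix (Fin n) (Fin n) ℝ) (hP : P.PosDef)
    (ε : ℝ) (hε : 0 < ε)
    (X : Matrix (Fin m ⊕ Fin m) (Fin m ⊕ Fin m) ℝ) (hX : X.IsSymm)
    (D : Set ((Fin n → ℝ) × (Fin m → ℝ)))
    -- the matrix inequality holds at every point of D
    (hLMI : ∀ p ∈ D,
      let M : Matrix (Fin n ⊕ Fin m) (Fin n ⊕ Fin m) ℝ :=
        Matrix.fromBlocks
          (P * Jfx p.1 p.2 + (Jfx p.1 p.2)ᵀ * P + ε • (1 : Matrix (Fin n) (Fin n) ℝ))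
          (P * Jfu p.1 p.2) ((Jfu p.1 p.2)ᵀ * P) 0
      let N : Matrix (Fin m ⊕ Fin m) (Fin n ⊕ Fin m) ℝ :=
        Matrix.fromBlocks (0 : Matrix (Fin m) (Fin n) ℝ) (1 : Matrix (Fin m) (Fin m) ℝ)
          (Jhx p.1 p.2) (Jhu p.1 p.2)
      (Nᵀ * X * N - M).PosSemidef)
    -- a C¹ trajectory remaining in D with ẋ = f(x,u), y = h(x,u)
    (x : ℝ → Fin n → ℝ) (u : ℝ → Fin m → ℝ) (y : ℝ → Fin m → ℝ)
    (x' : ℝ → Fin n → ℝ) (u' : ℝ → Fin m → ℝ) (y' : ℝ → Fin m → ℝ)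
    (hx : ∀ t i, HasDerivAt (fun τ => x τ i) (x' t i) t)
    (hu : ∀ t i, HasDerivAt (fun τ => u τ i) (u' t i) t)
    (hy : ∀ t i, HasDerivAt (fun τ => y τ i) (y' t i) t)
    (hdyn : ∀ t, x' t = f (x t) (u t))
    (hout : ∀ t, y t = h (x t) (u t))
    -- chain rule along the trajectory for f and h, via their Jacobians
    (hchainf : ∀ t i, HasDerivAt (fun τ => f (x τ) (u τ) i)
      ((Jfx (x t) (u t)).mulVec (x' t) i + (Jfu (x t) (u t)).mulVec (u' t) i) t)
    (hchainh : ∀ t, y' t =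
      (Jhx (x t) (u t)).mulVec (x' t) + (Jhu (x t) (u t)).mulVec (u' t))
    (hD : ∀ t, (x t, u t) ∈ D) :
    -- the storage function S = fᵀ P f satisfies Ṡ ≤ [u̇;ẏ]ᵀ X [u̇;ẏ] − ε‖f‖²
    ∀ t s, HasDerivAt (fun τ => f (x τ) (u τ) ⬝ᵥ P.mulVec (f (x τ) (u τ))) s t →
      s ≤ Sum.elim (u' t) (y' t) ⬝ᵥ X.mulVec (Sum.elim (u' t) (y' t))
          - ε * (f (x t) (u t) ⬝ᵥ f (x t) (u t)) :=
  stmt_1_general f Jfx Jfu Jhx Jhu P ε X D hLMI x u x' u' y' hdyn hchainf hchainh hD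
end

section
/- Let A ∈ ℝⁿˣⁿ, B ∈ ℝⁿˣᵐ, C ∈ ℝᵐˣⁿ, D ∈ ℝᵐˣᵐ, P symmetric positive definite, ε > 0, and X symmetric. If [[PA + AᵀP + εI, PB],[BᵀP, 0]] − [[0, I],[C, D]]ᵀ X [[0, I],[C, D]] ⪯ 0, then along any C¹ trajectory with ẋ = Ax + Bu and y = Cx + Du, the function S(x,u) = (Ax+Bu)ᵀ P (Ax+Bu) satisfies dS/dt ≤ [u̇; ẏ]ᵀ X [u̇; ẏ] − ε‖Ax + Bu‖² for all (x,u) ∈ ℝⁿ × ℝᵐ. -/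
/-!
Along a trajectory, `z = Ax + Bu` equals `ẋ`, so `ż = Aẋ + Bu̇` and `ẏ = Cẋ + Du̇`. Hence, with
`w = (ẋ, u̇)`, the quantity `Ṡ + ε‖ẋ‖²` is the quadratic form `wᵀ M w` of the first block matrix
of the LMI, while `(u̇, ẏ) = N w`. The LMI `wᵀ (Nᵀ X N - M) w ≥ 0` is then exactly the claim.
-/

open Matrix

section Calculus

variable {ι κ : Type*} {t : ℝ}

theorem HasDerivAt.matrix_mulVec [Fintype ι] [Fintype κ] (M : Matrix ι κ ℝ)
    {v : ℝ → κ → ℝ} {v' : κ → ℝ} (hv : HasDerivAt v v' t) :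
    HasDerivAt (fun τ => M *ᵥ v τ) (M *ᵥ v') t :=
  hasDerivAt_pi.2 fun i => HasDerivAt.fun_sum fun j _ => (hasDerivAt_pi.1 hv j).const_mul (M i j)

theorem HasDerivAt.dotProduct [Fintype ι] {u v : ℝ → ι → ℝ} {u' v' : ι → ℝ}
    (hu : HasDerivAt u u' t) (hv : HasDerivAt v v' t) :
    HasDerivAt (fun τ => u τ ⬝ᵥ v τ) (u' ⬝ᵥ v t + u t ⬝ᵥ v') t := by
  simp only [_root_.dotProduct, ← Finset.sum_add_distrib]
  exact HasDerivAt.fun_sum fun i _ => (hasDerivAt_pi.1 hu i).mul (hasDerivAt_pi.1 hv i)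

end Calculus

section Algebra

variable {ι κ ν μ : Type*} [Fintype ι] [Fintype κ]

theorem Matrix.PosSemidef.dotProduct_mulVec_le_of_sub [Fintype μ] {M : Matrix ι ι ℝ}
    {N : Matrix μ ι ℝ} {X : Matrix μ μ ℝ} (h : (Nᵀ * X * N - M).PosSemidef) (w : ι → ℝ) :
    w ⬝ᵥ M *ᵥ w ≤ N *ᵥ w ⬝ᵥ X *ᵥ (N *ᵥ w) := by
  have := h.dotProduct_mulVec_nonneg w
  rw [star_trivial, sub_mulVec, dotProduct_sub, ← mulVec_mulVec, ← mulVec_mulVec,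
    dotProduct_mulVec, vecMul_transpose] at this
  linarith

theorem fromBlocks_zero_one_mulVec_sumElim_s2 [DecidableEq κ] (C : Matrix ν ι ℝ) (D : Matrix ν κ ℝ)
    (a : ι → ℝ) (b : κ → ℝ) :
    fromBlocks 0 1 C D *ᵥ Sum.elim a b = Sum.elim b (C *ᵥ a + D *ᵥ b) := by
  simp [fromBlocks_mulVec]

theorem sumElim_dotProduct_fromBlocks_mulVec_sumElim [DecidableEq ι] (A P : Matrix ι ι ℝ)
    (B : Matrix ι κ ℝ) (ε : ℝ) (a : ι → ℝ) (b : κ → ℝ) :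
    Sum.elim a b ⬝ᵥ fromBlocks (P * A + Aᵀ * P + ε • 1) (P * B) (Bᵀ * P) 0 *ᵥ Sum.elim a b
      = (A *ᵥ a + B *ᵥ b) ⬝ᵥ P *ᵥ a + a ⬝ᵥ P *ᵥ (A *ᵥ a + B *ᵥ b) + ε * (a ⬝ᵥ a) := by
  have hA : a ⬝ᵥ Aᵀ *ᵥ (P *ᵥ a) = A *ᵥ a ⬝ᵥ P *ᵥ a := by
    rw [dotProduct_mulVec, vecMul_transpose]
  have hB : b ⬝ᵥ Bᵀ *ᵥ (P *ᵥ a) = B *ᵥ b ⬝ᵥ P *ᵥ a := by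
    rw [dotProduct_mulVec, vecMul_transpose]
  simp only [fromBlocks_mulVec, sumElim_dotProduct_sumElim, add_mulVec, mulVec_add,
    dotProduct_add, add_dotProduct, ← mulVec_mulVec, hA, hB, smul_mulVec, one_mulVec,
    dotProduct_smul, smul_eq_mul, zero_mulVec, dotProduct_zero, Sum.elim_comp_inl,
    Sum.elim_comp_inr]
  ring

theorem dotProduct_mulVec_add_le_of_krasovskii_lmi [DecidableEq ι] [DecidableEq κ] [Fintype ν]
    {A P : Matrix ι ι ℝ} {B : Matrix ι κ ℝ} {C : Matrix ν ι ℝ} {D : Matrix ν κ ℝ}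
    {X : Matrix (κ ⊕ ν) (κ ⊕ ν) ℝ} {ε : ℝ}
    (hLMI : ((fromBlocks (0 : Matrix κ ι ℝ) 1 C D)ᵀ * X * fromBlocks 0 1 C D
      - fromBlocks (P * A + Aᵀ * P + ε • 1) (P * B) (Bᵀ * P) 0).PosSemidef)
    (a : ι → ℝ) (b : κ → ℝ) :
    (A *ᵥ a + B *ᵥ b) ⬝ᵥ P *ᵥ a + a ⬝ᵥ P *ᵥ (A *ᵥ a + B *ᵥ b)
      ≤ Sum.elim b (C *ᵥ a + D *ᵥ b) ⬝ᵥ X *ᵥ Sum.elim b (C *ᵥ a + D *ᵥ b) - ε * (a ⬝ᵥ a) := by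
  have h := hLMI.dotProduct_mulVec_le_of_sub (Sum.elim a b)
  rw [fromBlocks_zero_one_mulVec_sumElim_s2, sumElim_dotProduct_fromBlocks_mulVec_sumElim] at h
  linarith

end Algebra

theorem stmt_2_general {n m : ℕ}
    (A : Matrix (Fin n) (Fin n) ℝ) (B : Matrix (Fin n) (Fin m) ℝ)
    (C : Matrix (Fin m) (Fin n) ℝ) (Dm : Matrix (Fin m) (Fin m) ℝ)
    (P : Matrix (Fin n) (Fin n) ℝ)
    (ε : ℝ)
    (X : Matrix (Fin m ⊕ Fin m) (Fin m ⊕ Fin m) ℝ)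
    (hLMI :
      let M : Matrix (Fin n ⊕ Fin m) (Fin n ⊕ Fin m) ℝ :=
        Matrix.fromBlocks (P * A + Aᵀ * P + ε • (1 : Matrix (Fin n) (Fin n) ℝ))
          (P * B) (Bᵀ * P) 0
      let N : Matrix (Fin m ⊕ Fin m) (Fin n ⊕ Fin m) ℝ :=
        Matrix.fromBlocks (0 : Matrix (Fin m) (Fin n) ℝ) (1 : Matrix (Fin m) (Fin m) ℝ) C Dm
      (Nᵀ * X * N - M).PosSemidef)
    -- an arbitrary C¹ trajectory of the linear system
    (x : ℝ → Fin n → ℝ) (u : ℝ → Fin m → ℝ) (y : ℝ → Fin m → ℝ)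
    (x' : ℝ → Fin n → ℝ) (u' : ℝ → Fin m → ℝ) (y' : ℝ → Fin m → ℝ)
    (hx : ∀ t i, HasDerivAt (fun τ => x τ i) (x' t i) t)
    (hu : ∀ t i, HasDerivAt (fun τ => u τ i) (u' t i) t)
    (hy : ∀ t i, HasDerivAt (fun τ => y τ i) (y' t i) t)
    (hdyn : ∀ t, x' t = A.mulVec (x t) + B.mulVec (u t))
    (hout : ∀ t, y t = C.mulVec (x t) + Dm.mulVec (u t)) :
    -- S(x,u) = (Ax+Bu)ᵀ P (Ax+Bu) satisfies Ṡ ≤ [u̇;ẏ]ᵀ X [u̇;ẏ] − ε‖Ax+Bu‖²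
    ∀ t s, HasDerivAt (fun τ =>
        (A.mulVec (x τ) + B.mulVec (u τ)) ⬝ᵥ P.mulVec (A.mulVec (x τ) + B.mulVec (u τ))) s t →
      s ≤ Sum.elim (u' t) (y' t) ⬝ᵥ X.mulVec (Sum.elim (u' t) (y' t))
          - ε * ((A.mulVec (x t) + B.mulVec (u t)) ⬝ᵥ (A.mulVec (x t) + B.mulVec (u t))) := by
  intro t s hS
  have hxt := hasDerivAt_pi.2 (hx t)
  have hut := hasDerivAt_pi.2 (hu t)
  have hz := (hxt.matrix_mulVec A).fun_add (hut.matrix_mulVec B)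
  have hy' : y' t = C *ᵥ x' t + Dm *ᵥ u' t := by
    have hCD := (hxt.matrix_mulVec C).fun_add (hut.matrix_mulVec Dm)
    rw [← funext hout] at hCD
    exact (hasDerivAt_pi.2 (hy t)).unique hCD
  rw [hS.unique (hz.dotProduct (hz.matrix_mulVec P)), hy', ← hdyn t]
  exact dotProduct_mulVec_add_le_of_krasovskii_lmi hLMI (x' t) (u' t)

/-- LTI specialization of the Krasovskii-type delta dissipativity certificate for
`ẋ = Ax + Bu`, `y = Cx + Du`. -/
theorem stmt_2 {n m : ℕ}
    (A : Matrix (Fin n) (Fin n) ℝ) (B : Matrix (Fin n) (Fin m) ℝ)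
    (C : Matrix (Fin m) (Fin n) ℝ) (Dm : Matrix (Fin m) (Fin m) ℝ)
    (P : Matrix (Fin n) (Fin n) ℝ) (hP : P.PosDef)
    (ε : ℝ) (hε : 0 < ε)
    (X : Matrix (Fin m ⊕ Fin m) (Fin m ⊕ Fin m) ℝ) (hX : X.IsSymm)
    (hLMI :
      let M : Matrix (Fin n ⊕ Fin m) (Fin n ⊕ Fin m) ℝ :=
        Matrix.fromBlocks (P * A + Aᵀ * P + ε • (1 : Matrix (Fin n) (Fin n) ℝ))
          (P * B) (Bᵀ * P) 0
      let N : Matrix (Fin m ⊕ Fin m) (Fin n ⊕ Fin m) ℝ :=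
        Matrix.fromBlocks (0 : Matrix (Fin m) (Fin n) ℝ) (1 : Matrix (Fin m) (Fin m) ℝ) C Dm
      (Nᵀ * X * N - M).PosSemidef)
    -- an arbitrary C¹ trajectory of the linear system
    (x : ℝ → Fin n → ℝ) (u : ℝ → Fin m → ℝ) (y : ℝ → Fin m → ℝ)
    (x' : ℝ → Fin n → ℝ) (u' : ℝ → Fin m → ℝ) (y' : ℝ → Fin m → ℝ)
    (hx : ∀ t i, HasDerivAt (fun τ => x τ i) (x' t i) t)
    (hu : ∀ t i, HasDerivAt (fun τ => u τ i) (u' t i) t)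
    (hy : ∀ t i, HasDerivAt (fun τ => y τ i) (y' t i) t)
    (hdyn : ∀ t, x' t = A.mulVec (x t) + B.mulVec (u t))
    (hout : ∀ t, y t = C.mulVec (x t) + Dm.mulVec (u t)) :
    -- S(x,u) = (Ax+Bu)ᵀ P (Ax+Bu) satisfies Ṡ ≤ [u̇;ẏ]ᵀ X [u̇;ẏ] − ε‖Ax+Bu‖²
    ∀ t s, HasDerivAt (fun τ =>
        (A.mulVec (x τ) + B.mulVec (u τ)) ⬝ᵥ P.mulVec (A.mulVec (x τ) + B.mulVec (u τ))) s t →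
      s ≤ Sum.elim (u' t) (y' t) ⬝ᵥ X.mulVec (Sum.elim (u' t) (y' t))
          - ε * ((A.mulVec (x t) + B.mulVec (u t)) ⬝ᵥ (A.mulVec (x t) + B.mulVec (u t))) :=
  stmt_2_general A B C Dm P ε X hLMI x u y x' u' y' hx hu hy hdyn hout
end
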